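/- A bounded linear operator T: ℓ¹ → W defined on the canonical basis by T(eᵢ) = wᵢ is compact if and only if the sequence {wᵢ} is relatively compact in the Banach space W. -/

import Mathlib

/-!
The unit ball of `ℓ¹` lies in the closed absolutely convex hull of the basis vectors `± eᵢ`, so `T`
maps it into the closed absolutely convex hull of `{wᵢ}`. In a Banach space that hull is compact
as soon as `{wᵢ}` is totally bounded (Mazur), which gives compactness of `T`. Conversely the
`wᵢ = T eᵢ` lie in the image of the unit ball.
-/

open Set Metric
open scoped ENNReal Pointwise

section AbsConvex

variable {ι E : Type*} [AddCommGroup E] [Module ℝ E] {s : Set E}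

theorem AbsConvex.sum_smul_mem_smul (hs : AbsConvex ℝ s) (hne : s.Nonempty) {c : ι → ℝ}
    {v : ι → E} (G : Finset ι) (hv : ∀ i ∈ G, v i ∈ s) :
    ∑ i ∈ G, c i • v i ∈ (∑ i ∈ G, |c i|) • s := by
  classical
  induction G using Finset.induction_on with
  | empty => simp [zero_smul_set hne]
  | insert a G ha ih =>
    rw [Finset.sum_insert ha, Finset.sum_insert ha,
      hs.2.add_smul (abs_nonneg _) (Finset.sum_nonneg fun i _ => abs_nonneg _)]
    refine add_mem_add ?_ (ih fun i hi => hv i (Finset.mem_insert_of_mem hi))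
    exact hs.1.smul_mono (by simp) (smul_mem_smul_set (hv a (Finset.mem_insert_self a G)))

theorem AbsConvex.sum_smul_mem (hs : AbsConvex ℝ s) (hne : s.Nonempty) {c : ι → ℝ} {v : ι → E}
    {G : Finset ι} (hc : ∑ i ∈ G, |c i| ≤ 1) (hv : ∀ i ∈ G, v i ∈ s) :
    ∑ i ∈ G, c i • v i ∈ s :=
  hs.1 _ (by rwa [Real.norm_of_nonneg (Finset.sum_nonneg fun i _ => abs_nonneg _)])
    (hs.sum_smul_mem_smul hne G hv)

variable [TopologicalSpace E]

theorem AbsConvex.mem_of_hasSum (hs : AbsConvex ℝ s) (hcl : IsClosed s) (hne : s.Nonempty)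
    {c : ι → ℝ} {v : ι → E} {y : E} (hy : HasSum (fun i => c i • v i) y)
    (hc : ∀ G : Finset ι, ∑ i ∈ G, |c i| ≤ 1) (hv : ∀ i, v i ∈ s) : y ∈ s :=
  hcl.mem_of_tendsto hy (.of_forall fun G => hs.sum_smul_mem hne (hc G) fun i _ => hv i)

end AbsConvex

namespace lp

variable {ι : Type*}

theorem sum_abs_le_norm (x : lp (fun _ : ι => ℝ) 1) (G : Finset ι) : ∑ i ∈ G, |x i| ≤ ‖x‖ := by
  simpa using lp.sum_rpow_le_norm_rpow (by simp) x G

variable [DecidableEq ι] {𝕜 E : Type*} [NormedField 𝕜] [NormedAddCommGroup E] [NormedSpace 𝕜 E]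
  {p : ℝ≥0∞} [Fact (1 ≤ p)]

theorem hasSum_smul_apply_single (hp : p ≠ ∞) (T : lp (fun _ : ι => 𝕜) p →L[𝕜] E)
    (x : lp (fun _ : ι => 𝕜) p) : HasSum (fun i => x i • T (lp.single p i 1)) (T x) := by
  convert (lp.hasSum_single hp x).mapL T using 2 with i
  rw [← map_smul, ← lp.single_smul, smul_eq_mul, mul_one]

theorem image_closedBall_subset_closedAbsConvexHull [Nonempty ι] {F : Type*}
    [NormedAddCommGroup F] [NormedSpace ℝ F] (T : lp (fun _ : ι => ℝ) 1 →L[ℝ] F) :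
    T '' closedBall 0 1 ⊆ closedAbsConvexHull ℝ (range fun i => T (lp.single 1 i 1)) := by
  rintro _ ⟨x, hx, rfl⟩
  rw [mem_closedBall_zero_iff] at hx
  exact absConvex_convexClosedHull.mem_of_hasSum isClosed_closedAbsConvexHull
    ((range_nonempty _).mono subset_closedAbsConvexHull)
    (hasSum_smul_apply_single ENNReal.one_ne_top T x) (fun G => (sum_abs_le_norm x G).trans hx)
    (fun i => subset_closedAbsConvexHull ⟨i, rfl⟩)

end lp

/-- A bounded linear operator T : ℓ¹ → W with T(eᵢ) = wᵢ on the canonical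
basis is compact if and only if the sequence {wᵢ} is relatively compact in W. -/
theorem stmt_7 (W : Type*) [NormedAddCommGroup W] [NormedSpace ℝ W] [CompleteSpace W]
    (w : ℕ → W) (T : lp (fun _ : ℕ => ℝ) 1 →L[ℝ] W)
    (hT : ∀ i : ℕ, T (lp.single 1 i (1 : ℝ)) = w i) :
    IsCompactOperator T ↔ IsCompact (closure (Set.range w)) := by
  constructor
  · intro hc
    refine (hc.isCompact_closure_image_closedBall 1).of_isClosed_subset isClosed_closure
      (closure_mono ?_)
    rintro _ ⟨i, rfl⟩
    exact ⟨lp.single 1 i 1, by simp [lp.norm_single], hT i⟩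
  · intro hK
    have hball := lp.image_closedBall_subset_closedAbsConvexHull T
    simp only [hT] at hball
    exact (isCompactOperator_iff_image_closedBall_subset_compact
      (T : lp (fun _ : ℕ => ℝ) 1 →ₗ[ℝ] W) one_pos).2
      ⟨_, isCompact_closedAbsConvexHull_of_totallyBounded
        (hK.totallyBounded.subset subset_closure), hball⟩
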